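/- Let x_1 ≤ ... ≤ x_n be real numbers with empirical CDF F_n, and define the L-estimator μ̂_{j:m} = ∑_{i=1}^{n} x_{i:n} (F_{B_{j:m}}(i/n) - F_{B_{j:m}}((i-1)/n)), where F_{B_{j:m}} is the Beta(j, m-j+1) CDF. Then (1/m) ∑_{j=1}^{m} μ̂_{j:m} equals the sample mean (1/n) ∑_{i=1}^{n} x_i. -/

import Mathlib

/-!
Summed over `j`, the Beta(j, m-j+1) densities are `m` times the binomial expansion of
`(p + (1 - p))^(m-1)`, i.e. the constant `m`. Hence `∑ⱼ F_{B_{j:m}}(t) = m t`, every weight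
`∑ⱼ (F_{B_{j:m}}(i/n) - F_{B_{j:m}}((i-1)/n))` equals `m / n`, and the average of the
L-estimators is the sample mean.
-/

open MeasureTheory Set

/-- Density of the Beta(j, m-j+1) distribution. -/
noncomputable def betaPDF (j m : ℕ) (p : ℝ) : ℝ :=
  (m.factorial : ℝ) / ((j - 1).factorial * (m - j).factorial) * p ^ (j - 1) * (1 - p) ^ (m - j)

/-- CDF of the Beta(j, m-j+1) distribution. -/
noncomputable def betaCDF (j m : ℕ) (t : ℝ) : ℝ := ∫ p in (0:ℝ)..t, betaPDF j m p

/-- The L-estimator `μ̂_{j:m} = ∑_{i=1}^n x_{i:n} (F_{B_{j:m}}(i/n) - F_{B_{j:m}}((i-1)/n))`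
computed from a sorted sample `x : Fin n → ℝ`. -/
noncomputable def Lest (n : ℕ) (x : Fin n → ℝ) (j m : ℕ) : ℝ :=
  ∑ i : Fin n, x i * (betaCDF j m (((i : ℕ) + 1) / n) - betaCDF j m ((i : ℕ) / n))

lemma betaPDF_succ_succ {i k : ℕ} (hi : i ≤ k) (p : ℝ) :
    betaPDF (i + 1) (k + 1) p = (k + 1) * (p ^ i * (1 - p) ^ (k - i) * k.choose i) := by
  rw [betaPDF, Nat.cast_choose ℝ hi, Nat.factorial_succ, Nat.add_sub_cancel,
    Nat.add_sub_add_right]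
  push_cast
  ring

lemma sum_betaPDF (m : ℕ) (p : ℝ) : ∑ j ∈ Finset.Icc 1 m, betaPDF j m p = m := by
  cases m with
  | zero => simp
  | succ k =>
    rw [← Finset.Ico_add_one_right_eq_Icc, Finset.sum_Ico_eq_sum_range, Nat.add_sub_cancel]
    calc ∑ i ∈ Finset.range (k + 1), betaPDF (1 + i) (k + 1) p
        = (k + 1) * ∑ i ∈ Finset.range (k + 1), p ^ i * (1 - p) ^ (k - i) * k.choose i := by
          rw [Finset.mul_sum]
          refine Finset.sum_congr rfl fun i hi => ?_
          rw [add_comm 1 i, betaPDF_succ_succ (Nat.lt_succ_iff.mp (Finset.mem_range.mp hi))]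
      _ = k + 1 := by rw [← add_pow, add_sub_cancel, one_pow, mul_one]
      _ = ((k + 1 : ℕ) : ℝ) := (Nat.cast_succ k).symm

lemma continuous_betaPDF (j m : ℕ) : Continuous (betaPDF j m) := by
  unfold betaPDF
  fun_prop

lemma sum_betaCDF (m : ℕ) (t : ℝ) : ∑ j ∈ Finset.Icc 1 m, betaCDF j m t = m * t := by
  simp only [betaCDF]
  rw [← intervalIntegral.integral_finsetSum fun j _ =>
    (continuous_betaPDF j m).intervalIntegrable _ _]
  simp [sum_betaPDF, mul_comm]

lemma sum_Lest (n : ℕ) (x : Fin n → ℝ) (m : ℕ) :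
    ∑ j ∈ Finset.Icc 1 m, Lest n x j m = m / n * ∑ i, x i := by
  simp only [Lest]
  rw [Finset.sum_comm, Finset.mul_sum]
  refine Finset.sum_congr rfl fun i _ => ?_
  rw [← Finset.mul_sum, Finset.sum_sub_distrib, sum_betaCDF, sum_betaCDF]
  ring

theorem stmt_8_general
    (n m : ℕ) (hm : 1 ≤ m)
    (x : Fin n → ℝ) :
    (1 / (m : ℝ)) * ∑ j ∈ Finset.Icc 1 m, Lest n x j m
      = (1 / (n : ℝ)) * ∑ i : Fin n, x i := by
  have hm0 : (m : ℝ) ≠ 0 := by positivity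
  rw [sum_Lest]
  field_simp

/-- The average over `j = 1,…,m` of the L-estimators `μ̂_{j:m}` equals the sample mean. -/
theorem stmt_8
    (n m : ℕ) (hn : 1 ≤ n) (hm : 1 ≤ m)
    (x : Fin n → ℝ) (hx : Monotone x) :
    (1 / (m : ℝ)) * ∑ j ∈ Finset.Icc 1 m, Lest n x j m
      = (1 / (n : ℝ)) * ∑ i : Fin n, x i :=
  stmt_8_general n m hm x
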